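/- If S, D, M, N are positive integers with S ≤ N, D ≤ M, D divides M, and S² > 3M + 3M·ln D + 6SD + 6SD·ln(N/S), then there exists a table T : [N] × [N] → [M] such that for every set A ⊆ [M] with |A| = M/D and all sets B₁, B₂ ⊆ [N] with |B₁| ≥ S and |B₂| ≥ S, the number of pairs (i,j) ∈ B₁ × B₂ with T(i,j) ∈ A is at most 2·(|A|/M)·|B₁|·|B₂|. -/

import Mathlib

/-!
Choose the table uniformly at random. By averaging, it suffices to control the sets with
`#B₁ = #B₂ = S`. For fixed `A, B₁, B₂` with `#A = M / D` the count `X` of cells of `B₁ × B₂`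
coloured in `A` satisfies `𝔼 2^X = (1 + 1/D)^(S²)`, so `ℙ(X > 2S²/D) ≤ (1 + 1/D)^(S²) / 2^(2S²/D)`.
A union bound over the `C(M, M/D) · C(N, S)²` triples then leaves a good table, since
`log C(n, k) ≤ k (1 + log (n/k))` and the hypothesis make the total probability less than one.
-/

open Finset Real

section Averaging

variable {α β : Type*} [DecidableEq α] [DecidableEq β]

theorem sum_le_mul_card_of_forall_subset_card_eq {f : α → ℝ} {c : ℝ} {S : ℕ} (hS : 0 < S)
    {B : Finset α} (hSB : S ≤ #B) (h : ∀ C ⊆ B, #C = S → ∑ i ∈ C, f i ≤ c * S) :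
    ∑ i ∈ B, f i ≤ c * #B := by
  induction B using Finset.strongInduction with
  | H B ih =>
    rcases hSB.eq_or_lt with hBS | hSB
    · exact hBS ▸ h B Subset.rfl hBS.symm
    -- dropping an element of minimal weight cannot lower the average
    obtain ⟨i₀, hi₀, hmin⟩ := B.exists_min_image f (card_pos.mp (hS.trans hSB))
    have hB : (1 : ℝ) < #B := by norm_cast; omega
    have herase : ∑ i ∈ B.erase i₀, f i ≤ c * (#B - 1) := by
      have := ih (B.erase i₀) (erase_ssubset hi₀) (by rw [card_erase_of_mem hi₀]; omega)
        fun C hC => h C (hC.trans (erase_subset _ _))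
      rwa [card_erase_of_mem hi₀, Nat.cast_sub (by omega), Nat.cast_one] at this
    have hsplit := sum_erase_add B f hi₀
    have hmin_le : #B • f i₀ ≤ ∑ i ∈ B, f i := card_nsmul_le_sum B f _ hmin
    rw [nsmul_eq_mul] at hmin_le
    nlinarith

theorem sum_sum_le_of_forall_subset_card_eq {w : α → β → ℝ} {ρ : ℝ} {S : ℕ} (hS : 0 < S)
    {B₁ : Finset α} {B₂ : Finset β} (h₁ : S ≤ #B₁) (h₂ : S ≤ #B₂)
    (h : ∀ C₁ ⊆ B₁, ∀ C₂ ⊆ B₂, #C₁ = S → #C₂ = S → ∑ i ∈ C₁, ∑ j ∈ C₂, w i j ≤ ρ * S * S) :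
    ∑ i ∈ B₁, ∑ j ∈ B₂, w i j ≤ ρ * #B₁ * #B₂ := by
  have hrows : ∀ C₁ ⊆ B₁, #C₁ = S → ∑ i ∈ C₁, ∑ j ∈ B₂, w i j ≤ ρ * #B₂ * S := by
    intro C₁ hC₁ hC₁S
    rw [sum_comm]
    have := sum_le_mul_card_of_forall_subset_card_eq (c := ρ * S) hS h₂ fun C₂ hC₂ hC₂S => by
      rw [sum_comm]; exact h C₁ hC₁ C₂ hC₂ hC₁S hC₂S
    linarith
  have := sum_le_mul_card_of_forall_subset_card_eq hS h₁ hrows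
  linarith

end Averaging

theorem natCast_card_filter_product {α β R : Type*} [AddCommMonoidWithOne R]
    (B₁ : Finset α) (B₂ : Finset β) (q : α × β → Prop) [DecidablePred q] :
    (#{p ∈ B₁ ×ˢ B₂ | q p} : R) = ∑ i ∈ B₁, ∑ j ∈ B₂, if q (i, j) then 1 else 0 := by
  rw [card_filter, sum_product]
  push_cast
  rfl

section Counting

variable {α β ι : Type*} [Fintype α] [DecidableEq α] [Fintype β] [DecidableEq β]

theorem sum_two_pow_card_filter_mem (P : Finset α) (A : Finset β) :
    ∑ ω : α → β, (2 : ℝ) ^ #{p ∈ P | ω p ∈ A}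
      = (Fintype.card β + #A) ^ #P * (Fintype.card β : ℝ) ^ (Fintype.card α - #P) := by
  set g : α → β → ℝ := fun p c => if p ∈ P ∧ c ∈ A then 2 else 1
  have hfactor (ω : α → β) : (2 : ℝ) ^ #{p ∈ P | ω p ∈ A} = ∏ p, g p (ω p) := by
    simp only [g, ite_and, ← prod_filter, prod_const, filter_univ_mem]
  have hcolor (p : α) :
      ∑ c, g p c = if p ∈ P then (Fintype.card β + #A : ℝ) else Fintype.card β := by
    split_ifs with hp
    · simp only [g, hp, true_and, sum_ite, subset_univ, filter_mem_eq_of_subset, sum_const,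
        nsmul_eq_mul, filter_not, card_sdiff, card_univ, inter_univ,
        Nat.cast_sub (card_le_univ A), mul_one]
      ring
    · simp [g, hp]
  simp only [hfactor, ← Fintype.prod_sum, hcolor, prod_ite, filter_univ_mem, prod_const, filter_not,
    card_sdiff, card_univ, inter_univ]

theorem card_filter_lt_mul_rpow_le_sum {b : ℝ} (hb : 1 ≤ b) (s : Finset ι) (X : ι → ℕ) (t : ℝ) :
    #{i ∈ s | t < X i} * b ^ t ≤ ∑ i ∈ s, b ^ X i := by
  calc #{i ∈ s | t < X i} * b ^ t = ∑ i ∈ s with t < X i, b ^ t := by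
        rw [sum_const, nsmul_eq_mul]
    _ ≤ ∑ i ∈ s with t < X i, b ^ X i := sum_le_sum fun i hi => by
        rw [← rpow_natCast]
        exact rpow_le_rpow_of_exponent_le hb (mem_filter.mp hi).2.le
    _ ≤ ∑ i ∈ s, b ^ X i :=
        sum_le_sum_of_subset_of_nonneg (filter_subset _ _) fun _ _ _ => by positivity

theorem exists_forall_not_of_sum_card_filter_lt {Ω : Type*} [Fintype Ω] (I : Finset ι)
    (bad : ι → Ω → Prop) [∀ i, DecidablePred (bad i)]
    (h : ∑ i ∈ I, #{ω | bad i ω} < Fintype.card Ω) : ∃ ω, ∀ i ∈ I, ¬ bad i ω := by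
  classical
  by_contra! hbad
  refine h.not_ge ?_
  calc Fintype.card Ω = #(univ : Finset Ω) := card_univ.symm
    _ ≤ #(I.biUnion fun i => {ω | bad i ω}) := card_le_card fun ω _ => by
        obtain ⟨i, hi, hω⟩ := hbad ω
        exact mem_biUnion.mpr ⟨i, hi, mem_filter.mpr ⟨mem_univ _, hω⟩⟩
    _ ≤ _ := card_biUnion_le

theorem exists_forall_card_filter_mem_le (I : Finset ι) (A : ι → Finset β) (P : ι → Finset α)
    (t : ℝ) (h : ∑ i ∈ I, (Fintype.card β + #(A i) : ℝ) ^ #(P i)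
        * (Fintype.card β : ℝ) ^ (Fintype.card α - #(P i))
      < (Fintype.card β : ℝ) ^ Fintype.card α * 2 ^ t) :
    ∃ ω : α → β, ∀ i ∈ I, #{p ∈ P i | ω p ∈ A i} ≤ t := by
  have hbad (i : ι) : (#{ω : α → β | t < #{p ∈ P i | ω p ∈ A i}} : ℝ) * 2 ^ t
      ≤ (Fintype.card β + #(A i) : ℝ) ^ #(P i) * (Fintype.card β : ℝ) ^ (Fintype.card α - #(P i)) :=
    (card_filter_lt_mul_rpow_le_sum one_le_two univ _ t).trans_eq
      (sum_two_pow_card_filter_mem _ _)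
  have hsum : ∑ i ∈ I, (#{ω : α → β | t < #{p ∈ P i | ω p ∈ A i}} : ℝ)
      < (Fintype.card β : ℝ) ^ Fintype.card α := by
    refine lt_of_mul_lt_mul_right ?_ (by positivity : (0 : ℝ) ≤ 2 ^ t)
    rw [sum_mul]
    exact (sum_le_sum fun i _ => hbad i).trans_lt h
  simpa using exists_forall_not_of_sum_card_filter_lt I
    (fun i (ω : α → β) => t < #{p ∈ P i | ω p ∈ A i})
    (by simp only [Fintype.card_fun]; exact_mod_cast hsum)

end Counting

theorem log_choose_le_mul_one_add_log_div {n k : ℕ} (hk : 0 < k) (hkn : k ≤ n) :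
    log (n.choose k) ≤ k * (1 + log (n / k)) := by
  have hk' : (0 : ℝ) < k := by exact_mod_cast hk
  have hn' : (0 : ℝ) < n := by exact_mod_cast hk.trans_le hkn
  have hchoose : (n.choose k : ℝ) ≤ (n / k) ^ k * exp k :=
    calc (n.choose k : ℝ) ≤ n ^ k / k.factorial := Nat.choose_le_pow_div k n
      _ = (n / k) ^ k * (k ^ k / k.factorial) := by
        rw [div_pow, ← mul_div_assoc, div_mul_cancel₀ _ (by positivity)]
      _ ≤ (n / k) ^ k * exp k := by gcongr; exact Real.pow_div_factorial_le_exp _ hk'.le k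
  calc log (n.choose k) ≤ log ((n / k) ^ k * exp k) :=
        log_le_log (by exact_mod_cast Nat.choose_pos hkn) hchoose
    _ = k * (1 + log (n / k)) := by
        rw [log_mul (by positivity) (exp_ne_zero _), log_pow, log_exp]; ring

theorem choose_mul_choose_sq_mul_pow_lt_two_rpow {N M S D a : ℕ} (hS : 0 < S) (hD : 0 < D)
    (hSN : S ≤ N) (ha : 0 < a) (haD : a * D = M)
    (h : (3 * M : ℝ) + 3 * M * log D + 6 * S * D + 6 * S * D * log ((N : ℝ) / S) < (S : ℝ) ^ 2) :
    (M.choose a : ℝ) * N.choose S ^ 2 * (1 + 1 / D) ^ (S * S) < 2 ^ (2 * S * S / D : ℝ) := by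
  have hD' : (0 : ℝ) < D := by exact_mod_cast hD
  have haD' : (a : ℝ) * D = M := by exact_mod_cast haD
  have haM : a ≤ M := haD ▸ Nat.le_mul_of_pos_right a hD
  have hchooseM := log_choose_le_mul_one_add_log_div ha haM
  rw [← haD', mul_div_cancel_left₀ _ (by positivity)] at hchooseM
  have hchooseN := log_choose_le_mul_one_add_log_div hS hSN
  have hlog : log (1 + 1 / D) ≤ 1 / D := by
    linarith [log_le_sub_one_of_pos (by positivity : (0 : ℝ) < 1 + 1 / D)]
  have hlog2 : 2 / 3 < log 2 := by linarith [log_two_gt_d9]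
  set w : ℝ := S * S / D
  have hu : a * (1 + log D) + 2 * (S * (1 + log (N / S))) < w / 3 := by
    rw [lt_div_iff₀ (by norm_num), lt_div_iff₀ hD']
    linear_combination h + 3 * (1 + log D) * haD'
  have hw : 0 < w := by positivity
  have hchooseM_pos : (0 : ℝ) < M.choose a := by exact_mod_cast Nat.choose_pos haM
  have hchooseN_pos : (0 : ℝ) < N.choose S := by exact_mod_cast Nat.choose_pos hSN
  rw [← log_lt_log_iff (by positivity) (by positivity), log_rpow two_pos, log_mul (by positivity)
    (by positivity), log_mul (by positivity) (by positivity), log_pow, log_pow]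
  have hpow : (↑(S * S) : ℝ) * log (1 + 1 / D) ≤ w := by
    push_cast
    calc (S : ℝ) * S * log (1 + 1 / D) ≤ S * S * (1 / D) := by gcongr
      _ = w := by ring
  -- the entropy terms are below `w / 3`, and `4 / 3 < 2 log 2`
  have htwo : 4 / 3 * w < 2 * S * S / D * log 2 := by
    calc 4 / 3 * w < 2 * w * log 2 := by nlinarith
      _ = 2 * S * S / D * log 2 := by ring
  push_cast at hpow ⊢
  linarith

theorem exists_table_card_filter_le_of_card_eq {N M S D : ℕ} (hS : 0 < S) (hD : 0 < D)
    (hSN : S ≤ N) (hDM : D ≤ M) (hdvd : D ∣ M)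
    (h : (3 * M : ℝ) + 3 * M * log D + 6 * S * D + 6 * S * D * log ((N : ℝ) / S) < (S : ℝ) ^ 2) :
    ∃ ω : Fin N × Fin N → Fin M, ∀ A : Finset (Fin M), #A = M / D →
      ∀ B₁ B₂ : Finset (Fin N), #B₁ = S → #B₂ = S →
        #{p ∈ B₁ ×ˢ B₂ | ω p ∈ A} ≤ (2 * S * S / D : ℝ) := by
  set a := M / D
  have haD : a * D = M := Nat.div_mul_cancel hdvd
  have hM : (0 : ℝ) < M := by exact_mod_cast hD.trans_le hDM
  set I := (univ : Finset (Fin M)).powersetCard a ×ˢ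
    ((univ : Finset (Fin N)).powersetCard S ×ˢ (univ : Finset (Fin N)).powersetCard S)
  have hI {A B₁ B₂} : (A, B₁, B₂) ∈ I ↔ #A = a ∧ #B₁ = S ∧ #B₂ = S := by
    simp [I, mem_powersetCard]
  -- `M ^ (N * N) * 𝔼 2 ^ X` for a single triple
  have hterm : ((M + a : ℕ) : ℝ) ^ (S * S) * (M : ℝ) ^ (N * N - S * S)
      = (M : ℝ) ^ (N * N) * (1 + 1 / D) ^ (S * S) := by
    have hMa : ((M + a : ℕ) : ℝ) = M * (1 + 1 / D) := by
      rw [← haD]; push_cast; field_simp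
    rw [← pow_mul_pow_sub (M : ℝ) (Nat.mul_le_mul hSN hSN), hMa, mul_pow]
    ring
  obtain ⟨ω, hω⟩ := exists_forall_card_filter_mem_le I (·.1) (fun i => i.2.1 ×ˢ i.2.2)
    (2 * S * S / D) <| by
    calc ∑ i ∈ I, _ = ∑ i ∈ I, (M : ℝ) ^ (N * N) * (1 + 1 / D) ^ (S * S) :=
        sum_congr rfl fun i hi => by
          obtain ⟨A, B₁, B₂⟩ := i
          obtain ⟨hA, h₁, h₂⟩ := hI.mp hi
          simp only [Fintype.card_fin, Fintype.card_prod, card_product, hA, h₁, h₂]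
          exact_mod_cast hterm
      _ = (M : ℝ) ^ (N * N) * (M.choose a * N.choose S ^ 2 * (1 + 1 / D) ^ (S * S)) := by
          simp only [sum_const, I, card_product, card_powersetCard, card_univ, Fintype.card_fin,
            nsmul_eq_mul]
          push_cast; ring
      _ < _ := by
          simp only [Fintype.card_prod, Fintype.card_fin]
          exact mul_lt_mul_of_pos_left (choose_mul_choose_sq_mul_pow_lt_two_rpow hS hD hSN
            (Nat.div_pos hDM hD) haD h) (by positivity)
  exact ⟨ω, fun A hA B₁ B₂ h₁ h₂ => hω (A, B₁, B₂) (hI.mpr ⟨hA, h₁, h₂⟩)⟩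

theorem stmt0_general (N M S D : ℕ) (hS : 0 < S) (hD : 0 < D)
    (hSN : S ≤ N) (hDM : D ≤ M) (hdvd : D ∣ M)
    (h : (3 * M : ℝ) + 3 * M * Real.log D + 6 * S * D
          + 6 * S * D * Real.log ((N : ℝ) / S) < (S : ℝ) ^ 2) :
    ∃ T : Fin N → Fin N → Fin M,
      ∀ A : Finset (Fin M), A.card = M / D →
      ∀ B₁ B₂ : Finset (Fin N), S ≤ B₁.card → S ≤ B₂.card →
        (((B₁ ×ˢ B₂).filter (fun p => T p.1 p.2 ∈ A)).card : ℝ)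
          ≤ 2 * ((A.card : ℝ) / M) * ((B₁.card : ℝ) * B₂.card) := by
  obtain ⟨ω, hω⟩ := exists_table_card_filter_le_of_card_eq hS hD hSN hDM hdvd h
  refine ⟨Function.curry ω, fun A hA B₁ B₂ h₁ h₂ => ?_⟩
  have hdensity : (#A : ℝ) / M = 1 / D := by
    have hM : (M : ℝ) ≠ 0 := by exact_mod_cast (hD.trans_le hDM).ne'
    rw [hA, Nat.cast_div hdvd (by positivity)]
    field_simp
  have := sum_sum_le_of_forall_subset_card_eq (ρ := 2 / D) hS h₁ h₂ fun C₁ _ C₂ _ hC₁ hC₂ => by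
    rw [← natCast_card_filter_product]
    exact (hω A hA C₁ C₂ hC₁ hC₂).trans_eq (by ring)
  calc (#{p ∈ B₁ ×ˢ B₂ | ω p ∈ A} : ℝ)
      = ∑ i ∈ B₁, ∑ j ∈ B₂, if ω (i, j) ∈ A then 1 else 0 := natCast_card_filter_product ..
    _ ≤ 2 / D * #B₁ * #B₂ := this
    _ = 2 * (#A / M) * (#B₁ * #B₂) := by rw [hdensity]; ring

/-- existence of an (S,D)-balanced table. -/
theorem stmt0 (N M S D : ℕ) (hN : 0 < N) (hM : 0 < M) (hS : 0 < S) (hD : 0 < D)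
    (hSN : S ≤ N) (hDM : D ≤ M) (hdvd : D ∣ M)
    (h : (3 * M : ℝ) + 3 * M * Real.log D + 6 * S * D
          + 6 * S * D * Real.log ((N : ℝ) / S) < (S : ℝ) ^ 2) :
    ∃ T : Fin N → Fin N → Fin M,
      ∀ A : Finset (Fin M), A.card = M / D →
      ∀ B₁ B₂ : Finset (Fin N), S ≤ B₁.card → S ≤ B₂.card →
        (((B₁ ×ˢ B₂).filter (fun p => T p.1 p.2 ∈ A)).card : ℝ)
          ≤ 2 * ((A.card : ℝ) / M) * ((B₁.card : ℝ) * B₂.card) :=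
  stmt0_general N M S D hS hD hSN hDM hdvd h
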